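/- Let (X, d) be a metric space, f, g : X → X, and suppose f is a Suzuki type generalized (Z_G, g)-contraction. If v₁, v₂ ∈ X are both coincidence points of f and g (i.e., f v_i = g v_i) with resulting points of coincidence u₁ = f v₁ and u₂ = f v₂, then u₁ = u₂, i.e., the point of coincidence of f and g is unique. -/

import Mathlib

lemma lt_of_simulation_of_diag_le {G ζ : ℝ → ℝ → ℝ} {cG : ℝ}
    (hP2 : ∀ t : ℝ, 0 ≤ t → G t t ≤ cG)
    (hz1 : ∀ t s : ℝ, 0 < t → 0 < s → ζ t s < G s t) {t : ℝ} (ht : 0 < t) :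
    ζ t t < cG :=
  (hz1 t t ht ht).trans_le (hP2 t ht.le)

lemma max_dist_of_coincidence {X : Type*} [MetricSpace X] {f g : X → X} {v₁ v₂ : X}
    (h1 : f v₁ = g v₁) (h2 : f v₂ = g v₂) :
    max (max (dist (g v₁) (g v₂)) (dist (g v₁) (f v₁)))
      (max (dist (g v₂) (f v₂)) ((dist (g v₁) (f v₂) + dist (g v₂) (f v₁)) / 2)) =
      dist (g v₁) (g v₂) := by
  rw [h1, h2, dist_self, dist_self, dist_comm (g v₂) (g v₁), add_self_div_two]
  simp

theorem suzuki_generalized_ZG_unique_poc_general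
    {X : Type*} [MetricSpace X] (f g : X → X)
    (G ζ : ℝ → ℝ → ℝ) (cG : ℝ)
    (hP2 : ∀ t : ℝ, 0 ≤ t → G t t ≤ cG)
    (hz1 : ∀ t s : ℝ, 0 < t → 0 < s → ζ t s < G s t)
    (hcontr : ∀ x y : X, g x ≠ g y → dist (g x) (f x) / 2 < dist (g x) (g y) →
      cG ≤ ζ (dist (f x) (f y)) (max (max (dist (g x) (g y)) (dist (g x) (f x)))
        (max (dist (g y) (f y)) ((dist (g x) (f y) + dist (g y) (f x)) / 2))))
    (v₁ v₂ : X) (h1 : f v₁ = g v₁) (h2 : f v₂ = g v₂) :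
    f v₁ = f v₂ := by
  by_contra hne
  have hgne : g v₁ ≠ g v₂ := by rwa [← h1, ← h2]
  have hpos : 0 < dist (g v₁) (g v₂) := dist_pos.mpr hgne
  have hsuzuki : dist (g v₁) (f v₁) / 2 < dist (g v₁) (g v₂) := by
    rwa [h1, dist_self, zero_div]
  have hge := hcontr v₁ v₂ hgne hsuzuki
  rw [max_dist_of_coincidence h1 h2, h1, h2] at hge
  exact hge.not_gt (lt_of_simulation_of_diag_le hP2 hz1 hpos)

theorem suzuki_generalized_ZG_unique_poc
    {X : Type*} [MetricSpace X] (f g : X → X)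
    (G ζ : ℝ → ℝ → ℝ) (cG : ℝ) (hcG : 0 ≤ cG)
    (hGcont : Continuous fun p : ℝ × ℝ => G p.1 p.2)
    (hGle : ∀ s t : ℝ, 0 ≤ s → 0 ≤ t → G s t ≤ s)
    (hGeq : ∀ s t : ℝ, 0 ≤ s → 0 ≤ t → G s t = s → s = 0 ∨ t = 0)
    (hP1 : ∀ s t : ℝ, 0 ≤ s → 0 ≤ t → cG < G s t → t < s)
    (hP2 : ∀ t : ℝ, 0 ≤ t → G t t ≤ cG)
    (hz1 : ∀ t s : ℝ, 0 < t → 0 < s → ζ t s < G s t)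
    (hz2 : ∀ (t s : ℕ → ℝ) (L : ℝ), (∀ n, 0 < t n) → (∀ n, 0 < s n) →
      Filter.Tendsto t Filter.atTop (nhds L) → Filter.Tendsto s Filter.atTop (nhds L) →
      0 < L → (∀ n, t n < s n) →
      Filter.limsup (fun n => ζ (t n) (s n)) Filter.atTop < cG)
    (hcontr : ∀ x y : X, g x ≠ g y → dist (g x) (f x) / 2 < dist (g x) (g y) →
      cG ≤ ζ (dist (f x) (f y)) (max (max (dist (g x) (g y)) (dist (g x) (f x)))
        (max (dist (g y) (f y)) ((dist (g x) (f y) + dist (g y) (f x)) / 2))))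
    (v₁ v₂ : X) (h1 : f v₁ = g v₁) (h2 : f v₂ = g v₂) :
    f v₁ = f v₂ :=
  suzuki_generalized_ZG_unique_poc_general f g G ζ cG hP2 hz1 hcontr v₁ v₂ h1 h2
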